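/- arXiv:2303.17086 — 2 statements merged into one kernel-verified Lean document; each statement's English description precedes it below -/
import Mathlib

section
/- For any discrete-time signal x, STL formulas φ₁, φ₂, φ, natural numbers a < b, κ < a, and time k: (x,k) ⊨ F_{κ}(¬φ) iff (x,k) ⊨ ¬ F_{κ} φ; (x,k) ⊨ F_{κ}(φ₁ ∧ φ₂) iff (x,k) ⊨ F_{κ} φ₁ ∧ F_{κ} φ₂; and (x,k) ⊨ F_{κ}(φ₁ U_{(a,b)} φ₂) iff (x,k) ⊨ (F_{κ} φ₁) U_{(a,b)} (F_{κ} φ₂). -/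
/-- Syntax of STL formulas over states in `Fin n → ℝ`. -/
inductive STL (n : ℕ) : Type where
  | top : STL n
  | atom : ((Fin n → ℝ) → Prop) → STL n
  | not : STL n → STL n
  | and : STL n → STL n → STL n
  | untilC : ℕ → ℕ → STL n → STL n → STL n   -- until with closed interval [a,b]
  | untilO : ℕ → ℕ → STL n → STL n → STL n   -- until with open interval (a,b)
  | always : ℕ → ℕ → STL n → STL n            -- G over closed interval [a,b]
  | alwaysO : ℕ → ℕ → STL n → STL n           -- G over open interval (a,b)

/-- Discrete-time satisfaction relation `(x, k) ⊨ φ`. -/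
def STL.sat {n : ℕ} (x : ℕ → Fin n → ℝ) : ℕ → STL n → Prop
  | _, STL.top => True
  | k, STL.atom p => p (x k)
  | k, STL.not φ => ¬ STL.sat x k φ
  | k, STL.and φ ψ => STL.sat x k φ ∧ STL.sat x k ψ
  | k, STL.untilC a b φ ψ =>
      ∃ k', k + a ≤ k' ∧ k' ≤ k + b ∧ STL.sat x k' ψ ∧
        ∀ k'', k ≤ k'' → k'' ≤ k' → STL.sat x k'' φ
  | k, STL.untilO a b φ ψ =>
      ∃ k', k + a < k' ∧ k' < k + b ∧ STL.sat x k' ψ ∧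
        ∀ k'', k ≤ k'' → k'' ≤ k' → STL.sat x k'' φ
  | k, STL.always a b φ => ∀ k', k + a ≤ k' → k' ≤ k + b → STL.sat x k' φ
  | k, STL.alwaysO a b φ => ∀ k', k + a < k' → k' < k + b → STL.sat x k' φ

/-- Disjunction. -/
def STL.or {n : ℕ} (φ ψ : STL n) : STL n := STL.not (STL.and (STL.not φ) (STL.not ψ))

/-- Eventually over the closed interval [a,b]. -/
def STL.F {n : ℕ} (a b : ℕ) (φ : STL n) : STL n := STL.untilC a b STL.top φ

/-- Eventually over the open interval (a,b). -/
def STL.FO {n : ℕ} (a b : ℕ) (φ : STL n) : STL n := STL.untilO a b STL.top φ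

/-- Always over the closed interval [a,b]. -/
def STL.G {n : ℕ} (a b : ℕ) (φ : STL n) : STL n := STL.always a b φ

/-- Always over the open interval (a,b). -/
def STL.GO {n : ℕ} (a b : ℕ) (φ : STL n) : STL n := STL.alwaysO a b φ

lemma F_sat {n : ℕ} (x : ℕ → Fin n → ℝ) (φ : STL n) (κ k : ℕ) :
    STL.sat x k (STL.F κ κ φ) ↔ STL.sat x (k + κ) φ := by
  constructor
  · rintro ⟨k', h1, h2, h3, -⟩
    have : k' = k + κ := le_antisymm h2 h1
    rwa [this] at h3
  · intro h
    exact ⟨k + κ, le_rfl, le_rfl, h, fun _ _ _ => trivial⟩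

theorem stmt4 {n : ℕ} (x : ℕ → Fin n → ℝ) (φ₁ φ₂ φ : STL n) (a b κ k : ℕ)
    (hab : a < b) (hκ : κ < a) :
    (STL.sat x k (STL.F κ κ (STL.not φ)) ↔ STL.sat x k (STL.not (STL.F κ κ φ))) ∧
    (STL.sat x k (STL.F κ κ (STL.and φ₁ φ₂)) ↔
      STL.sat x k (STL.and (STL.F κ κ φ₁) (STL.F κ κ φ₂))) ∧
    (STL.sat x k (STL.F κ κ (STL.untilO a b φ₁ φ₂)) ↔
      STL.sat x k (STL.untilO a b (STL.F κ κ φ₁) (STL.F κ κ φ₂))) := by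
  refine ⟨?_, ?_, ?_⟩
  · rw [F_sat]
    show ¬ _ ↔ ¬ _
    rw [F_sat]
  · rw [F_sat]
    show _ ↔ _ ∧ _
    rw [F_sat, F_sat]
    rfl
  · rw [F_sat]
    constructor
    · rintro ⟨k', h1, h2, h3, h4⟩
      have hκk : κ ≤ k' := le_of_lt (lt_of_le_of_lt (by omega) h1)
      refine ⟨k' - κ, by omega, by omega, ?_, ?_⟩
      · rw [F_sat]; have : k' - κ + κ = k' := by omega
        rwa [this]
      · intro k'' hk1 hk2
        rw [F_sat]
        exact h4 (k'' + κ) (by omega) (by omega)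
    · rintro ⟨m, h1, h2, h3, h4⟩
      rw [F_sat] at h3
      refine ⟨m + κ, by omega, by omega, h3, ?_⟩
      intro k'' hk1 hk2
      have := h4 (k'' - κ) (by omega) (by omega)
      rw [F_sat] at this
      have h' : k'' - κ + κ = k'' := by omega
      rwa [h'] at this
end

section
/- Given a progress formula G_{[a,b]} F_{[0,c]} γ with a ≤ b and a splitting point κ with a < κ < b + c and κ − c ≥ a: if a signal x satisfies x ⊨ G_{[a, κ−c]} F_{[0,c]} γ ∧ F_{[κ−τ, κ]} γ ∧ F_{[κ, κ+c−τ]} γ ∧ G_{[κ, b]} F_{[0,c]} γ for some τ ∈ [max(0, κ−b), c], then x ⊨ G_{[a,b]} F_{[0,c]} γ. -/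
theorem stmt14 {n : ℕ} (x : ℕ → Fin n → ℝ) (p : (Fin n → ℝ) → Prop)
    (a b c κ τ : ℕ) (hab : a ≤ b) (haκ : a < κ) (hκ : κ < b + c) (hκc : a ≤ κ - c)
    (hτ1 : κ - b ≤ τ) (hτ2 : τ ≤ c)
    (h : STL.sat x 0 (STL.and (STL.and (STL.and
          (STL.G a (κ - c) (STL.F 0 c (STL.atom p)))
          (STL.F (κ - τ) κ (STL.atom p)))
          (STL.F κ (κ + c - τ) (STL.atom p)))
          (STL.G κ b (STL.F 0 c (STL.atom p))))) :
    STL.sat x 0 (STL.G a b (STL.F 0 c (STL.atom p))) := by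
  obtain ⟨⟨⟨h1, h2⟩, h3⟩, h4⟩ := h
  simp only [STL.G, STL.F, STL.sat, STL.or] at *
  intro k' hk1 hk2
  rcases lt_or_ge (κ - c) k' with hc1 | hc1
  · rcases lt_or_ge k' (κ - τ) with hc2 | hc2
    · obtain ⟨j, hj1, hj2, hj3, -⟩ := h2
      exact ⟨j, by omega, by omega, hj3, fun _ _ _ => trivial⟩
    · rcases lt_or_ge k' κ with hc3 | hc3
      · obtain ⟨j, hj1, hj2, hj3, -⟩ := h3
        exact ⟨j, by omega, by omega, hj3, fun _ _ _ => trivial⟩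
      · obtain ⟨j, hj1, hj2, hj3, -⟩ := h4 k' (by omega) (by omega)
        exact ⟨j, by omega, by omega, hj3, fun _ _ _ => trivial⟩
  · obtain ⟨j, hj1, hj2, hj3, -⟩ := h1 k' (by omega) (by omega)
    exact ⟨j, by omega, by omega, hj3, fun _ _ _ => trivial⟩
end
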